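/- arXiv:1202.2878 — 2 statements merged into one kernel-verified Lean document; each statement's English description precedes it below -/
import Mathlib

section
/- Let S_n, S be subdivisions (nondecreasing [0,∞]-valued sequences (s_k) with s_0 = 0, s_k = +∞ for k ≥ |S| where |S| = inf{k : s_k = +∞}, and ∪_k [s_k, s_{k+1}) = [0,∞)), and define the truncation operator Φ^S(f)(t) = f(t) if t lies in some even-indexed interval [s_{2k+1}, s_{2k+2}) and Φ^S(f)(t) = a otherwise. If S_n → S pointwise, f_n → f in the J1 topology, and the sequence (Φ^{S_n}(f_n)) is relatively compact in the J1 topology, then Φ^{S_n}(f_n) → Φ^S(f) in the J1 topology. -/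
open scoped NNReal ENNReal Topology
open Filter Set

noncomputable section

/-- A càdlàg function `[0,∞) → V`: right-continuous with left limits
(at every positive time). -/
def Cadlag {V : Type*} [PseudoMetricSpace V] (f : ℝ≥0 → V) : Prop :=
  (∀ t : ℝ≥0, ContinuousWithinAt f (Set.Ici t) t) ∧
  ∀ t : ℝ≥0, 0 < t → ∃ l : V, Filter.Tendsto f (nhdsWithin t (Set.Iio t)) (nhds l)

/-- A time change: an increasing bijection of `[0,∞)`. -/
def IsTimeChange (l : ℝ≥0 → ℝ≥0) : Prop := StrictMono l ∧ Function.Bijective l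

/-- Convergence in the Skorokhod J1 topology, along a filter `F`: there are
time changes `l i` with `‖l i − Id‖_∞ → 0` and uniform convergence of
`f i ∘ l i` to `g` on `[0,m]` for every `m` in some unbounded set. -/
def J1Tendsto {V : Type*} [PseudoMetricSpace V] {ι : Type*} (F : Filter ι)
    (f : ι → ℝ≥0 → V) (g : ℝ≥0 → V) : Prop :=
  ∃ l : ι → ℝ≥0 → ℝ≥0, (∀ i, IsTimeChange (l i)) ∧
    Filter.Tendsto (fun i => ⨆ s : ℝ≥0, edist (l i s) s) F (nhds 0) ∧
    ∃ M : Set ℝ≥0, (∀ r : ℝ≥0, ∃ m ∈ M, r ≤ m) ∧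
      ∀ m ∈ M, Filter.Tendsto
        (fun i => ⨆ s : Set.Icc (0:ℝ≥0) m, edist (f i (l i (s:ℝ≥0))) (g (s:ℝ≥0)))
        F (nhds 0)

/-- First hitting time of `a` : `T(f) = inf{t > 0 : f t = a} ∈ [0,∞]`. -/
def hitTime {V : Type*} [PseudoMetricSpace V] (a : V) (f : ℝ≥0 → V) : ℝ≥0∞ :=
  sInf ((fun t : ℝ≥0 => (t : ℝ≥0∞)) '' {t : ℝ≥0 | 0 < t ∧ f t = a})

/-- An excursion: a càdlàg path which sticks at `a` from its first hitting
time of `a` on. -/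
def IsExcursion {V : Type*} [PseudoMetricSpace V] (a : V) (f : ℝ≥0 → V) : Prop :=
  Cadlag f ∧ ∀ t : ℝ≥0, hitTime a f ≤ (t : ℝ≥0∞) → f t = a

end

noncomputable section

/-- A subdivision of `[0,∞)`: a nondecreasing `[0,∞]`-valued sequence whose
half-open intervals `[s_k, s_{k+1})` cover `[0,∞)`. -/
def IsSubdivision (S : ℕ → ℝ≥0∞) : Prop :=
  Monotone S ∧ ∀ t : ℝ≥0, ∃ k : ℕ, S k ≤ (t : ℝ≥0∞) ∧ (t : ℝ≥0∞) < S (k + 1)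

open Classical in
/-- The truncation operator `Φ^S`: keep `f` on the even intervals
`[s_{2k+1}, s_{2k+2})`, truncate to `a` elsewhere. -/
def PhiSub {V : Type*} (a : V) (S : ℕ → ℝ≥0∞) (f : ℝ≥0 → V) : ℝ≥0 → V :=
  fun t => if ∃ k : ℕ, S (2*k+1) ≤ (t : ℝ≥0∞) ∧ (t : ℝ≥0∞) < S (2*k+2) then f t else a

end

/-- Relative compactness for J1: every subsequence has a further subsequence
converging in J1 to some càdlàg limit. -/
def J1RelCompact {V : Type*} [PseudoMetricSpace V] (f : ℕ → ℝ≥0 → V) : Prop :=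
  ∀ u : ℕ → ℕ, StrictMono u → ∃ w : ℕ → ℕ, StrictMono w ∧ ∃ g : ℝ≥0 → V,
    Cadlag g ∧ J1Tendsto Filter.atTop (fun n => f (u (w n))) g

/-! By relative compactness it suffices to show that every J1 limit point `g` of `Φ^{S_n}(f_n)`
equals `Φ^S(F)`. Both are right-continuous, so they only need to agree off a countable set. Away
from the jumps of `F` and `g` (countably many, since both are càdlàg) and from the points `s_k`,
J1 convergence yields pointwise convergence, and a time `t` strictly inside `[s_j, s_{j+1})` lies in
`[s^n_j, s^n_{j+1})` for all large `n`; so `Φ^{S_n}(f_n)(t)` tends to `F t` or to `a` according to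
the parity of `j`, that is, to `Φ^S(F)(t)`. -/

lemma Filter.exists_tendsto_atTop_eventually_diag {P : ℕ → ℕ → Prop}
    (hP : ∀ n, ∀ᶠ i in atTop, P n i) :
    ∃ J : ℕ → ℕ, Tendsto J atTop atTop ∧ ∀ᶠ i in atTop, P (J i) i := by
  classical
  choose N hN using fun n => eventually_atTop.1 (hP n)
  refine ⟨fun i => Nat.findGreatest (fun n => N n + n ≤ i) i, ?_, ?_⟩
  · exact tendsto_atTop_atTop.2 fun n =>
      ⟨N n + n, fun i hi => Nat.le_findGreatest (by omega) hi⟩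
  · filter_upwards [eventually_ge_atTop (N 0)] with i hi
    have hJi := Nat.findGreatest_spec (P := fun n => N n + n ≤ i) (Nat.zero_le i)
      (by simpa using hi)
    exact hN _ _ (by omega)

section J1

variable {V : Type*} [PseudoMetricSpace V]

def J1Close (m : ℝ≥0) (ε : ℝ≥0∞) (h g : ℝ≥0 → V) : Prop :=
  ∃ l : ℝ≥0 → ℝ≥0, IsTimeChange l ∧ (⨆ s : ℝ≥0, edist (l s) s) < ε ∧
    (⨆ s : Icc (0:ℝ≥0) m, edist (h (l s)) (g s)) < ε

lemma isTimeChange_id : IsTimeChange (id : ℝ≥0 → ℝ≥0) :=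
  ⟨strictMono_id, Function.bijective_id⟩

lemma iSup_Icc_mono {m m' : ℝ≥0} (h : m ≤ m') (G : ℝ≥0 → ℝ≥0∞) :
    (⨆ s : Icc (0:ℝ≥0) m, G s) ≤ ⨆ s : Icc (0:ℝ≥0) m', G s :=
  iSup_le fun s =>
    le_iSup_of_le (f := fun s : Icc (0:ℝ≥0) m' => G s) ⟨s, s.2.1, s.2.2.trans h⟩ le_rfl

lemma J1Tendsto.comp {ι κ : Type*} {L : Filter ι} {L' : Filter κ} {f : ι → ℝ≥0 → V}
    {g : ℝ≥0 → V} (h : J1Tendsto L f g) {v : κ → ι} (hv : Tendsto v L' L) :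
    J1Tendsto L' (f ∘ v) g := by
  obtain ⟨l, hl, hl0, M, hM, hMc⟩ := h
  exact ⟨l ∘ v, fun _ => hl _, hl0.comp hv, M, hM, fun m hm => (hMc m hm).comp hv⟩

lemma J1Tendsto.eventually_j1Close {ι : Type*} {L : Filter ι} {f : ι → ℝ≥0 → V}
    {g : ℝ≥0 → V} (h : J1Tendsto L f g) (m : ℝ≥0) {ε : ℝ≥0∞} (hε : 0 < ε) :
    ∀ᶠ i in L, J1Close m ε (f i) g := by
  obtain ⟨l, hl, hl0, M, hM, hMc⟩ := h
  obtain ⟨m', hm'M, hmm'⟩ := hM m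
  filter_upwards [hl0.eventually (gt_mem_nhds hε), (hMc m' hm'M).eventually (gt_mem_nhds hε)]
    with i h1 h2
  exact ⟨l i, hl i, h1, (iSup_Icc_mono hmm' fun s => edist (f i (l i s)) (g s)).trans_lt h2⟩

lemma J1Tendsto.of_eventually_j1Close {f : ℕ → ℝ≥0 → V} {g : ℝ≥0 → V}
    (h : ∀ m : ℕ, ∀ᶠ i in atTop, J1Close m (m : ℝ≥0∞)⁻¹ (f i) g) :
    J1Tendsto atTop f g := by
  classical
  obtain ⟨J, hJ, hJclose⟩ := Filter.exists_tendsto_atTop_eventually_diag h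
  have hwit : ∀ i, ∃ l, IsTimeChange l ∧ (J1Close (J i) (J i : ℝ≥0∞)⁻¹ (f i) g →
      (⨆ s : ℝ≥0, edist (l s) s) < (J i : ℝ≥0∞)⁻¹ ∧
      (⨆ s : Icc (0:ℝ≥0) (J i), edist (f i (l s)) (g s)) < (J i : ℝ≥0∞)⁻¹) := fun i => by
    by_cases hi : J1Close (J i) (J i : ℝ≥0∞)⁻¹ (f i) g
    · obtain ⟨l, hl, hbd⟩ := hi
      exact ⟨l, hl, fun _ => hbd⟩
    · exact ⟨id, isTimeChange_id, fun h => absurd h hi⟩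
  choose l hl hbd using hwit
  have hεJ := ENNReal.tendsto_inv_nat_nhds_zero.comp hJ
  refine ⟨l, hl, ?_, univ, fun r => ⟨r, trivial, le_rfl⟩, fun m _ => ?_⟩
  · refine tendsto_order.2 ⟨fun _ h => absurd h ENNReal.not_lt_zero, fun ε hε => ?_⟩
    filter_upwards [hJclose, hεJ.eventually (gt_mem_nhds hε)] with i hi hiε
    exact (hbd i hi).1.trans hiε
  · refine tendsto_order.2 ⟨fun _ h => absurd h ENNReal.not_lt_zero, fun ε hε => ?_⟩
    filter_upwards [hJclose, hεJ.eventually (gt_mem_nhds hε), hJ.eventually_ge_atTop ⌈m⌉₊]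
      with i hi hiε hm
    have hmJ : m ≤ J i := (Nat.le_ceil m).trans (by exact_mod_cast hm)
    exact ((iSup_Icc_mono hmJ fun s => edist (f i (l i s)) (g s)).trans_lt (hbd i hi).2).trans hiε

lemma j1Tendsto_atTop_iff_eventually_j1Close {f : ℕ → ℝ≥0 → V} {g : ℝ≥0 → V} :
    J1Tendsto atTop f g ↔ ∀ (m : ℝ≥0) (ε : ℝ≥0∞), 0 < ε → ∀ᶠ i in atTop, J1Close m ε (f i) g :=
  ⟨fun h m _ hε => h.eventually_j1Close m hε, fun h => .of_eventually_j1Close fun m =>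
    h m _ (ENNReal.inv_pos.2 (ENNReal.natCast_ne_top m))⟩

lemma J1Tendsto.of_forall_subseq {f : ℕ → ℝ≥0 → V} {g : ℝ≥0 → V}
    (h : ∀ u : ℕ → ℕ, StrictMono u → ∃ w : ℕ → ℕ, J1Tendsto atTop (fun n => f (u (w n))) g) :
    J1Tendsto atTop f g := by
  refine j1Tendsto_atTop_iff_eventually_j1Close.2 fun m ε hε => ?_
  by_contra hfar
  obtain ⟨u, hu, hufar⟩ := extraction_of_frequently_atTop (not_eventually.1 hfar)
  obtain ⟨w, hw⟩ := h u hu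
  obtain ⟨n, hn⟩ := (hw.eventually_j1Close m hε).exists
  exact hufar _ hn

lemma J1Tendsto.tendsto_apply {ι : Type*} {L : Filter ι} {f : ι → ℝ≥0 → V} {g : ℝ≥0 → V}
    (h : J1Tendsto L f g) {s : ℝ≥0} (hs : ContinuousAt g s) :
    Tendsto (fun i => f i s) L (𝓝 (g s)) := by
  obtain ⟨l, hl, hl0, M, hM, hMc⟩ := h
  obtain ⟨m, hmM, hsm⟩ := hM (s + 1)
  set r : ι → ℝ≥0 := fun i => Function.invFun (l i) s
  have hlr : ∀ i, l i (r i) = s := fun i => Function.invFun_eq ((hl i).2.2 s)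
  have hr : Tendsto r L (𝓝 s) := by
    refine tendsto_iff_edist_tendsto_0.2 (tendsto_of_tendsto_of_tendsto_of_le_of_le
      tendsto_const_nhds hl0 (fun _ => zero_le) fun i => ?_)
    calc edist (r i) s = edist (l i (r i)) (r i) := by rw [hlr, edist_comm]
      _ ≤ ⨆ u, edist (l i u) u := le_iSup (fun u => edist (l i u) u) (r i)
  have hrm : ∀ᶠ i in L, r i ≤ m := (hr.eventually (gt_mem_nhds (lt_add_one s))).mono
    fun i hi => hi.le.trans hsm
  have hfr : Tendsto (fun i => edist (f i s) (g (r i))) L (𝓝 0) := by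
    refine tendsto_of_tendsto_of_tendsto_of_le_of_le' tendsto_const_nhds (hMc m hmM)
      (.of_forall fun _ => zero_le) (hrm.mono fun i hi => ?_)
    calc edist (f i s) (g (r i)) = edist (f i (l i (r i))) (g (r i)) := by rw [hlr]
      _ ≤ _ := le_iSup (fun u : Icc (0:ℝ≥0) m => edist (f i (l i u)) (g u)) ⟨r i, zero_le, hi⟩
  have hgr := tendsto_iff_edist_tendsto_0.1 (hs.tendsto.comp hr)
  exact tendsto_iff_edist_tendsto_0.2 (tendsto_of_tendsto_of_tendsto_of_le_of_le
    tendsto_const_nhds (by simpa using hfr.add hgr) (fun _ => zero_le)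
    fun _ => edist_triangle _ _ _)

end J1

section Cadlag

variable {V : Type*} [PseudoMetricSpace V]

lemma eq_of_continuousWithinAt_Ici_of_eqOn_dense {α β : Type*} [TopologicalSpace α]
    [LinearOrder α] [OrderTopology α] [DenselyOrdered α] [NoMaxOrder α] [TopologicalSpace β]
    [T2Space β] {g h : α → β} (hg : ∀ t, ContinuousWithinAt g (Ici t) t)
    (hh : ∀ t, ContinuousWithinAt h (Ici t) t) {D : Set α} (hD : Dense D) (heq : EqOn g h D) :
    g = h := by
  funext t
  have hcl : t ∈ closure (Ioi t ∩ D) :=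
    closure_minimal (hD.open_subset_closure_inter isOpen_Ioi) isClosed_closure
      (closure_Ioi' (nonempty_Ioi (a := t)) ▸ self_mem_Ici)
  have := mem_closure_iff_nhdsWithin_neBot.1 hcl
  have hsub : Ioi t ∩ D ⊆ Ici t := fun s hs => le_of_lt hs.1
  exact tendsto_nhds_unique_of_eventuallyEq ((hg t).mono hsub) ((hh t).mono hsub)
    (eventually_mem_nhdsWithin.mono fun s hs => heq hs.2)

lemma Set.Countable.dense_compl_nnreal {E : Set ℝ≥0} (hE : E.Countable) : Dense Eᶜ := by
  simpa only [← compl_iUnion₂, biUnion_of_singleton] using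
    dense_biInter_of_isOpen (fun x _ => isOpen_compl_singleton) hE
      fun x _ => dense_compl_singleton x

lemma Cadlag.tendsto_leftLim {F : ℝ≥0 → V} (hF : Cadlag F) {t : ℝ≥0} (ht : 0 < t) :
    Tendsto F (𝓝[<] t) (𝓝 (Function.leftLim F t)) :=
  tendsto_leftLim_of_tendsto (hF.2 t ht)

/-- Jumps larger than `δ` are isolated from the left: just before such a jump `F` stays
`δ / 3`-close to its left limit, which forbids further jumps larger than `δ` there. -/
lemma Cadlag.countable_setOf_lt_dist_leftLim {F : ℝ≥0 → V} (hF : Cadlag F) {δ : ℝ}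
    (hδ : 0 < δ) : {t | 0 < t ∧ δ < dist (Function.leftLim F t) (F t)}.Countable := by
  set D := {t | 0 < t ∧ δ < dist (Function.leftLim F t) (F t)}
  refine (countable_image_lt_image_Iio_within D id).mono fun x hx => ?_
  obtain ⟨z, hzx, hz⟩ := (mem_nhdsLT_iff_exists_Ioo_subset' hx.1).1
    ((hF.tendsto_leftLim hx.1).eventually (Metric.ball_mem_nhds _ (by positivity : 0 < δ / 3)))
  refine ⟨hx, z, hzx, fun y hy hyx => not_lt.1 fun hzy => ?_⟩
  have : (𝓝[<] y).NeBot := nhdsLT_neBot_of_exists_lt ⟨0, hy.1⟩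
  have hL : dist (Function.leftLim F y) (Function.leftLim F x) ≤ δ / 3 :=
    le_of_tendsto ((hF.tendsto_leftLim hy.1).dist tendsto_const_nhds)
      (mem_of_superset (Ioo_mem_nhdsLT hzy) fun s hs =>
        (Metric.mem_ball.1 (hz ⟨hs.1, hs.2.trans hyx⟩)).le)
  have hF' : dist (F y) (Function.leftLim F x) < δ / 3 := Metric.mem_ball.1 (hz ⟨hzy, hyx⟩)
  have := dist_triangle_right (Function.leftLim F y) (F y) (Function.leftLim F x)
  linarith [hy.2]

lemma Cadlag.countable_not_continuousAt {F : ℝ≥0 → V} (hF : Cadlag F) :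
    {t | ¬ ContinuousAt F t}.Countable := by
  refine (countable_iUnion fun n : ℕ => hF.countable_setOf_lt_dist_leftLim
    (Nat.one_div_pos_of_nat (n := n))).mono fun t ht => ?_
  have ht0 : 0 < t := pos_of_ne_zero fun h0 => ht <| by
    rw [h0, ← continuousWithinAt_univ, ← Ici_bot]
    exact hF.1 0
  have hjump : 0 < dist (Function.leftLim F t) (F t) := dist_nonneg.lt_of_ne' fun h0 => ht <| by
    have hleft : Tendsto F (𝓝[<] t) (𝓝 (F t)) := by
      rw [← (Metric.inseparable_iff.2 h0).nhds_eq]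
      exact hF.tendsto_leftLim ht0
    rw [ContinuousAt, ← nhdsLT_sup_nhdsGE, tendsto_sup]
    exact ⟨hleft, hF.1 t⟩
  obtain ⟨n, hn⟩ := exists_nat_one_div_lt hjump
  exact mem_iUnion.2 ⟨n, ht0, hn⟩

end Cadlag

section PhiSub

variable {V : Type*}

lemma phiSub_eq_of_mem_Ico (a : V) {S : ℕ → ℝ≥0∞} (hS : Monotone S) (f : ℝ≥0 → V) {j : ℕ}
    {t : ℝ≥0} (h₁ : S j ≤ t) (h₂ : t < S (j + 1)) :
    PhiSub a S f t = if Odd j then f t else a := by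
  obtain ⟨k, rfl | rfl⟩ := Nat.even_or_odd' j
  · rw [if_neg (Nat.not_odd_iff_even.2 (even_two_mul k)), PhiSub, if_neg]
    rintro ⟨k', hk₁, hk₂⟩
    rcases le_or_gt k k' with hkk' | hkk'
    · exact (h₂.trans_le (hS (by omega))).not_ge hk₁
    · exact (hk₂.trans_le (hS (by omega))).not_ge h₁
  · rw [if_pos (odd_two_mul_add_one k), PhiSub, if_pos ⟨k, h₁, h₂⟩]

lemma continuousWithinAt_Ici_phiSub [TopologicalSpace V] (a : V) {S : ℕ → ℝ≥0∞}
    (hS : IsSubdivision S) {f : ℝ≥0 → V} (hf : ∀ t, ContinuousWithinAt f (Ici t) t) (t : ℝ≥0) :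
    ContinuousWithinAt (PhiSub a S f) (Ici t) t := by
  obtain ⟨j, h₁, h₂⟩ := hS.2 t
  have heq : (fun s => if Odd j then f s else a) =ᶠ[𝓝[≥] t] PhiSub a S f := by
    filter_upwards [self_mem_nhdsWithin, mem_nhdsWithin_of_mem_nhds
      ((isOpen_Iio.preimage ENNReal.continuous_coe).mem_nhds h₂)] with s hts hs
    exact (phiSub_eq_of_mem_Ico a hS.1 f (h₁.trans (ENNReal.coe_le_coe.2 hts)) hs).symm
  refine ContinuousWithinAt.congr_of_eventuallyEq ?_ heq.symm
    (phiSub_eq_of_mem_Ico a hS.1 f h₁ h₂)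
  split_ifs
  · exact hf t
  · exact continuousWithinAt_const

end PhiSub

lemma eq_phiSub_of_j1Tendsto {V : Type*} [MetricSpace V] (a : V) {T : ℕ → ℕ → ℝ≥0∞}
    {S : ℕ → ℝ≥0∞} {φ : ℕ → ℝ≥0 → V} {F g : ℝ≥0 → V} (hT : ∀ n, Monotone (T n))
    (hS : IsSubdivision S) (hFc : Cadlag F) (hg : Cadlag g)
    (hTS : ∀ k, Tendsto (fun n => T n k) atTop (𝓝 (S k)))
    (hφF : J1Tendsto atTop φ F) (hφg : J1Tendsto atTop (fun n => PhiSub a (T n) (φ n)) g) :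
    g = PhiSub a S F := by
  set E := {s | ¬ ContinuousAt F s} ∪ {s | ¬ ContinuousAt g s} ∪ (↑) ⁻¹' range S
  have hE : E.Countable := (hFc.countable_not_continuousAt.union
    hg.countable_not_continuousAt).union ((countable_range S).preimage ENNReal.coe_injective)
  refine eq_of_continuousWithinAt_Ici_of_eqOn_dense hg.1 (continuousWithinAt_Ici_phiSub a hS hFc.1)
    hE.dense_compl_nnreal fun s hs => ?_
  simp only [E, mem_compl_iff, mem_union, mem_ofPred_eq, mem_preimage, mem_range, not_or,
    not_not, not_exists] at hs
  obtain ⟨⟨hFs, hgs⟩, hSs⟩ := hs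
  obtain ⟨j, h₁, h₂⟩ := hS.2 s
  have h₁' : S j < s := h₁.lt_of_ne (hSs j)
  have hev : ∀ᶠ n in atTop, PhiSub a (T n) (φ n) s = if Odd j then φ n s else a := by
    filter_upwards [(hTS j).eventually (gt_mem_nhds h₁'), (hTS (j + 1)).eventually (lt_mem_nhds h₂)]
      with n hn₁ hn₂
    exact phiSub_eq_of_mem_Ico a (hT n) (φ n) hn₁.le hn₂
  have hlim : Tendsto (fun n => if Odd j then φ n s else a) atTop
      (𝓝 (if Odd j then F s else a)) := by
    split_ifs
    · exact hφF.tendsto_apply hFs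
    · exact tendsto_const_nhds
  rw [phiSub_eq_of_mem_Ico a hS.1 F h₁ h₂]
  exact tendsto_nhds_unique ((hφg.tendsto_apply hgs).congr' hev) hlim

theorem statement5_general {V : Type*} [MetricSpace V] (a : V)
    (Sn : ℕ → ℕ → ℝ≥0∞) (S : ℕ → ℝ≥0∞) (f : ℕ → ℝ≥0 → V) (F : ℝ≥0 → V)
    (hSn : ∀ n, IsSubdivision (Sn n)) (hS : IsSubdivision S)
    (hFc : Cadlag F)
    (hSconv : ∀ k, Filter.Tendsto (fun n => Sn n k) Filter.atTop (nhds (S k)))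
    (hfF : J1Tendsto Filter.atTop f F)
    (hrc : J1RelCompact (fun n => PhiSub a (Sn n) (f n))) :
    J1Tendsto Filter.atTop (fun n => PhiSub a (Sn n) (f n)) (PhiSub a S F) := by
  refine .of_forall_subseq fun u hu => ?_
  obtain ⟨w, hw, g, hg, hJ⟩ := hrc u hu
  have huw : Tendsto (u ∘ w) atTop atTop := (hu.comp hw).tendsto_atTop
  refine ⟨w, ?_⟩
  rwa [← eq_phiSub_of_j1Tendsto a (fun n => (hSn _).1) hS hFc hg
    (fun k => (hSconv k).comp huw) (hfF.comp huw) hJ]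

/-- continuity of the truncation map. -/
theorem statement5 {V : Type*} [MetricSpace V] [PolishSpace V] (a : V)
    (Sn : ℕ → ℕ → ℝ≥0∞) (S : ℕ → ℝ≥0∞) (f : ℕ → ℝ≥0 → V) (F : ℝ≥0 → V)
    (hSn : ∀ n, IsSubdivision (Sn n)) (hS : IsSubdivision S)
    (hfc : ∀ n, Cadlag (f n)) (hFc : Cadlag F)
    (hSconv : ∀ k, Filter.Tendsto (fun n => Sn n k) Filter.atTop (nhds (S k)))
    (hfF : J1Tendsto Filter.atTop f F)
    (hrc : J1RelCompact (fun n => PhiSub a (Sn n) (f n))) :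
    J1Tendsto Filter.atTop (fun n => PhiSub a (Sn n) (f n)) (PhiSub a S F) :=
  statement5_general a Sn S f F hSn hS hFc hSconv hfF hrc
end

section
/- Let (λ_n), (μ_n) be sequences of increasing bijections of [0,∞) with ‖λ_n − Id‖_∞ → 0, ‖μ_n − Id‖_∞ → 0, suppose t_n → t > 0 with λ_n(t) = t_n for all n, and define ν_n(s) = λ_n(s) for s < t and ν_n(s) = μ_n(s−t) + t_n for s ≥ t. Then each ν_n is an increasing bijection of [0,∞), and ‖ν_n − Id‖_∞ ≤ ‖λ_n − Id‖_∞ + ‖μ_n − Id‖_∞ + |t − t_n|, hence ‖ν_n − Id‖_∞ → 0. -/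
open scoped NNReal ENNReal Topology
open Filter Set

lemma NNReal.edist_add_add_le (a b c d : ℝ≥0) :
    edist (a + c) (b + d) ≤ edist a b + edist c d := by
  simpa only [NNReal.coe_add, ← NNReal.isometry_coe.edist_eq] using
    _root_.edist_add_add_le (a : ℝ) c b d

noncomputable def pasteAt (f g : ℝ≥0 → ℝ≥0) (a b : ℝ≥0) : ℝ≥0 → ℝ≥0 :=
  fun s => if s < a then f s else g (s - a) + b

section pasteAt

variable {f g : ℝ≥0 → ℝ≥0} {a b : ℝ≥0}

lemma strictMono_pasteAt (hf : StrictMono f) (hg : StrictMono g) (hfa : f a ≤ b) :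
    StrictMono (pasteAt f g a b) := by
  intro s s' hss'
  unfold pasteAt
  by_cases hs' : s' < a
  · simpa [hss'.trans hs', hs'] using hf hss'
  by_cases hs : s < a
  · simp only [hs, hs', if_true, if_false]
    exact ((hf hs).trans_le hfa).trans_le le_add_self
  · simp only [hs, hs', if_false]
    exact add_lt_add_left (hg (tsub_lt_tsub_right_of_le (not_lt.mp hs) hss')) b

lemma surjective_pasteAt (hf : Monotone f) (hf' : Function.Surjective f)
    (hg : Function.Surjective g) (hfa : b ≤ f a) :
    Function.Surjective (pasteAt f g a b) := by
  intro y
  by_cases hy : y < b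
  · obtain ⟨x, rfl⟩ := hf' y
    have hxa : x < a := lt_of_not_ge fun hax => (hy.trans_le hfa).not_ge (hf hax)
    exact ⟨x, by simp [pasteAt, hxa]⟩
  · obtain ⟨u, hu⟩ := hg (y - b)
    refine ⟨u + a, ?_⟩
    simp [pasteAt, hu, tsub_add_cancel_of_le (not_lt.mp hy)]

lemma IsTimeChange.pasteAt (hf : IsTimeChange f) (hg : IsTimeChange g) (hfa : f a = b) :
    IsTimeChange (pasteAt f g a b) :=
  have hmono := strictMono_pasteAt hf.1 hg.1 hfa.le
  ⟨hmono, hmono.injective, surjective_pasteAt hf.1.monotone hf.2.2 hg.2.2 hfa.ge⟩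

lemma iSup_edist_pasteAt_le :
    ⨆ s, edist (pasteAt f g a b s) s ≤
      (⨆ s, edist (f s) s) + (⨆ s, edist (g s) s) + edist a b := by
  refine iSup_le fun s => ?_
  by_cases hs : s < a
  · simp only [pasteAt, hs, if_true]
    exact (le_iSup (fun s => edist (f s) s) s).trans (le_add_right (le_add_right le_rfl))
  · calc edist (pasteAt f g a b s) s
        = edist (g (s - a) + b) (s - a + a) := by
          simp [pasteAt, hs, tsub_add_cancel_of_le (not_lt.mp hs)]
      _ ≤ edist (g (s - a)) (s - a) + edist a b := by
          rw [edist_comm a b]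
          exact NNReal.edist_add_add_le _ _ _ _
      _ ≤ (⨆ s, edist (g s) s) + edist a b := by
          gcongr
          exact le_iSup (fun s => edist (g s) s) (s - a)
      _ ≤ _ := by
          rw [add_assoc]
          exact le_add_self

end pasteAt

theorem statement13_general (l m : ℕ → ℝ≥0 → ℝ≥0) (t : ℕ → ℝ≥0) (t0 : ℝ≥0)
    (hl : ∀ n, IsTimeChange (l n)) (hm : ∀ n, IsTimeChange (m n))
    (hln : Filter.Tendsto (fun n => ⨆ s : ℝ≥0, edist (l n s) s)
      Filter.atTop (nhds 0))
    (hmn : Filter.Tendsto (fun n => ⨆ s : ℝ≥0, edist (m n s) s)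
      Filter.atTop (nhds 0))
    (ht : Filter.Tendsto t Filter.atTop (nhds t0))
    (hfix : ∀ n, l n t0 = t n)
    (ν : ℕ → ℝ≥0 → ℝ≥0)
    (hν : ν = fun n s => if s < t0 then l n s else m n (s - t0) + t n) :
    (∀ n, IsTimeChange (ν n)) ∧
    (∀ n, (⨆ s : ℝ≥0, edist (ν n s) s) ≤
      (⨆ s : ℝ≥0, edist (l n s) s) + (⨆ s : ℝ≥0, edist (m n s) s) + edist t0 (t n)) ∧
    Filter.Tendsto (fun n => ⨆ s : ℝ≥0, edist (ν n s) s) Filter.atTop (nhds 0) := by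
  obtain rfl : ν = fun n => pasteAt (l n) (m n) t0 (t n) := hν
  have hbound n := iSup_edist_pasteAt_le (f := l n) (g := m n) (a := t0) (b := t n)
  have hsum : Tendsto (fun n => (⨆ s, edist (l n s) s) + (⨆ s, edist (m n s) s) + edist t0 (t n))
      atTop (𝓝 0) := by
    simpa using (hln.add hmn).add ((tendsto_const_nhds (x := t0)).edist ht)
  exact ⟨fun n => (hl n).pasteAt (hm n) (hfix n), hbound,
    tendsto_of_tendsto_of_tendsto_of_le_of_le tendsto_const_nhds hsum (fun _ => zero_le) hbound⟩

/-- pasting two vanishing families of time changes at `t0`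
(with `λ_n t0 = t_n`) gives a vanishing family of time changes, with the
explicit triangle bound. -/
theorem statement13 (l m : ℕ → ℝ≥0 → ℝ≥0) (t : ℕ → ℝ≥0) (t0 : ℝ≥0)
    (hl : ∀ n, IsTimeChange (l n)) (hm : ∀ n, IsTimeChange (m n))
    (hln : Filter.Tendsto (fun n => ⨆ s : ℝ≥0, edist (l n s) s)
      Filter.atTop (nhds 0))
    (hmn : Filter.Tendsto (fun n => ⨆ s : ℝ≥0, edist (m n s) s)
      Filter.atTop (nhds 0))
    (ht : Filter.Tendsto t Filter.atTop (nhds t0)) (ht0 : 0 < t0)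
    (hfix : ∀ n, l n t0 = t n)
    (ν : ℕ → ℝ≥0 → ℝ≥0)
    (hν : ν = fun n s => if s < t0 then l n s else m n (s - t0) + t n) :
    (∀ n, IsTimeChange (ν n)) ∧
    (∀ n, (⨆ s : ℝ≥0, edist (ν n s) s) ≤
      (⨆ s : ℝ≥0, edist (l n s) s) + (⨆ s : ℝ≥0, edist (m n s) s) + edist t0 (t n)) ∧
    Filter.Tendsto (fun n => ⨆ s : ℝ≥0, edist (ν n s) s) Filter.atTop (nhds 0) :=
  statement13_general l m t t0 hl hm hln hmn ht hfix ν hν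
end
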